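/- Let A and E be real tensors of size n₁×n₂×n₃ and B = A+E (entrywise). Let Ap be a Moore-Penrose inverse of A and Bp a Moore-Penrose inverse of B. Then ‖Bp − Ap‖_F ≤ √2·max{‖Ap‖₂², ‖Bp‖₂²}·‖E‖_F. -/

import Mathlib

open scoped Matrix.Norms.L2Operator

noncomputable section

/-- The t-product of third-order tensors. -/
def tProd {n₁ n₂ n₃ n₄ : ℕ} [NeZero n₃] (A : Fin n₁ → Fin n₂ → ZMod n₃ → ℝ)
    (B : Fin n₂ → Fin n₄ → ZMod n₃ → ℝ) : Fin n₁ → Fin n₄ → ZMod n₃ → ℝ :=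
  fun i j k => ∑ l : Fin n₂, ∑ m : ZMod n₃, A i l (k - m) * B l j m

/-- The Frobenius norm of a third-order tensor. -/
def frobNorm {n₁ n₂ n₃ : ℕ} [NeZero n₃] (A : Fin n₁ → Fin n₂ → ZMod n₃ → ℝ) : ℝ :=
  Real.sqrt (∑ i : Fin n₁, ∑ j : Fin n₂, ∑ k : ZMod n₃, (A i j k) ^ 2)

/-- The block circulant matrix of a third-order tensor. -/
def bcirc {n₁ n₂ n₃ : ℕ} (A : Fin n₁ → Fin n₂ → ZMod n₃ → ℝ) :
    Matrix (Fin n₁ × ZMod n₃) (Fin n₂ × ZMod n₃) ℝ :=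
  fun p q => A p.1 q.1 (p.2 - q.2)

/-- The spectral norm of a third-order tensor: the L2 operator norm of its
block circulant matrix. -/
def specNorm {n₁ n₂ n₃ : ℕ} [NeZero n₃] (A : Fin n₁ → Fin n₂ → ZMod n₃ → ℝ) : ℝ :=
  ‖bcirc A‖

/-- The identity tensor. -/
def tId (n n₃ : ℕ) : Fin n → Fin n → ZMod n₃ → ℝ :=
  fun i j k => if i = j ∧ k = 0 then 1 else 0

/-- The tensor transpose. -/
def tTrans {n₁ n₂ n₃ : ℕ} (A : Fin n₁ → Fin n₂ → ZMod n₃ → ℝ) :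
    Fin n₂ → Fin n₁ → ZMod n₃ → ℝ :=
  fun i j k => A j i (-k)

/-- `X` is a Moore-Penrose inverse of `A`. -/
def IsMPInv {n₁ n₂ n₃ : ℕ} [NeZero n₃] (A : Fin n₁ → Fin n₂ → ZMod n₃ → ℝ)
    (X : Fin n₂ → Fin n₁ → ZMod n₃ → ℝ) : Prop :=
  tProd (tProd A X) A = A ∧ tProd (tProd X A) X = X ∧
    tTrans (tProd A X) = tProd A X ∧ tTrans (tProd X A) = tProd X A

/-- The `i`-th DFT block of a third-order tensor. -/
def dftBlock {n₁ n₂ n₃ : ℕ} [NeZero n₃] (A : Fin n₁ → Fin n₂ → ZMod n₃ → ℝ) (i : ZMod n₃) :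
    Matrix (Fin n₁) (Fin n₂) ℂ :=
  fun p q => ∑ k : ZMod n₃,
    Complex.exp (-2 * Real.pi * Complex.I * (i.val : ℂ) * (k.val : ℂ) / (n₃ : ℂ)) * (A p q k : ℂ)

end

/-!
The block circulant embedding `bcirc` turns the t-product into the matrix product and the tensor
transpose into the matrix transpose, and it multiplies the squared Frobenius norm by `n₃`; so
`bcirc Ap` and `bcirc Bp` are Moore-Penrose inverses of `bcirc A` and `bcirc A + bcirc E`, and the
theorem is Wedin's bound for matrices. For matrices, with the orthogonal projections
`P = A A⁺` and `Q = B⁺ B`,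
  `B⁺ - A⁺ = -B⁺ E A⁺ + (1 - Q) Eᵀ A⁺ᵀ A⁺ + B⁺ B⁺ᵀ Eᵀ (1 - P)`,
the three terms are pairwise orthogonal for the trace inner product, and they are bounded by
`‖B⁺‖² ‖A⁺‖² ‖E‖²`, `‖A⁺‖⁴ ‖P E‖²` and `‖B⁺‖⁴ ‖(1 - P) E‖²`; since
`‖P E‖² + ‖(1 - P) E‖² = ‖E‖²`, the sum is at most `2 max(‖A⁺‖², ‖B⁺‖²)² ‖E‖²`.
-/

open Matrix

namespace Matrix

variable {m n p : Type*} [Fintype m] [Fintype n] [Fintype p]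

section MoorePenrose

variable {R : Type*} [CommRing R]

structure IsMoorePenroseInverse (A : Matrix m n R) (X : Matrix n m R) : Prop where
  mul_pinv_mul : A * X * A = A
  pinv_mul_pinv : X * A * X = X
  isSymm_mul_pinv : (A * X).IsSymm
  isSymm_pinv_mul : (X * A).IsSymm

namespace IsMoorePenroseInverse

variable {A : Matrix m n R} {X : Matrix n m R}

theorem symm (h : IsMoorePenroseInverse A X) : IsMoorePenroseInverse X A :=
  ⟨h.pinv_mul_pinv, h.mul_pinv_mul, h.isSymm_pinv_mul, h.isSymm_mul_pinv⟩

theorem isIdempotentElem_mul_pinv (h : IsMoorePenroseInverse A X) :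
    IsIdempotentElem (A * X) := by
  rw [IsIdempotentElem, ← Matrix.mul_assoc, h.mul_pinv_mul]

theorem transpose_mul_mul_pinv (h : IsMoorePenroseInverse A X) : Aᵀ * (A * X) = Aᵀ := by
  conv_lhs => rw [← h.isSymm_mul_pinv.eq]
  rw [← transpose_mul, h.mul_pinv_mul]

theorem pinv_mul_mul_transpose (h : IsMoorePenroseInverse A X) : X * A * Aᵀ = Aᵀ := by
  conv_lhs => rw [← h.isSymm_pinv_mul.eq]
  rw [← transpose_mul, ← Matrix.mul_assoc, h.mul_pinv_mul]

theorem pinv_eq_transpose_mul (h : IsMoorePenroseInverse A X) : X = Aᵀ * Xᵀ * X := by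
  conv_lhs => rw [← h.pinv_mul_pinv, ← h.isSymm_pinv_mul.eq, transpose_mul]

theorem pinv_eq_mul_transpose (h : IsMoorePenroseInverse A X) : X = X * Xᵀ * Aᵀ := by
  conv_lhs => rw [← h.pinv_mul_pinv, Matrix.mul_assoc, ← h.isSymm_mul_pinv.eq, transpose_mul]
  rw [Matrix.mul_assoc]

theorem pinv_mul_one_sub (h : IsMoorePenroseInverse A X) [DecidableEq m] :
    X * (1 - A * X) = 0 := by
  rw [Matrix.mul_sub, Matrix.mul_one, ← Matrix.mul_assoc, h.pinv_mul_pinv, sub_self]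

theorem one_sub_mul_pinv (h : IsMoorePenroseInverse A X) [DecidableEq n] :
    (1 - X * A) * X = 0 := by
  rw [Matrix.sub_mul, Matrix.one_mul, h.pinv_mul_pinv, sub_self]

variable [DecidableEq m] [DecidableEq n] {E : Matrix m n R} {Ap Bp : Matrix n m R}

theorem pinv_sub_pinv_eq (hA : IsMoorePenroseInverse A Ap)
    (hB : IsMoorePenroseInverse (A + E) Bp) :
    Bp - Ap = -(Bp * E * Ap) + (1 - Bp * (A + E)) * Eᵀ * Apᵀ * Ap +
      Bp * Bpᵀ * Eᵀ * (1 - A * Ap) := by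
  have hBp : Bp * (1 - A * Ap) = Bp * Bpᵀ * Eᵀ * (1 - A * Ap) := by
    conv_lhs => rw [hB.pinv_eq_mul_transpose]
    simp only [Matrix.mul_assoc]
    rw [transpose_add, Matrix.add_mul, Matrix.mul_sub Aᵀ, Matrix.mul_one,
      hA.transpose_mul_mul_pinv, sub_self, zero_add]
  have hAt : (1 - Bp * (A + E)) * Aᵀ = -((1 - Bp * (A + E)) * Eᵀ) := by
    rw [show Aᵀ = (A + E)ᵀ - Eᵀ by rw [transpose_add, add_sub_cancel_right], Matrix.mul_sub,
      Matrix.sub_mul, Matrix.one_mul, hB.pinv_mul_mul_transpose, sub_self, zero_sub]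
  have hAp : (1 - Bp * (A + E)) * Ap = -((1 - Bp * (A + E)) * Eᵀ * Apᵀ * Ap) := by
    conv_lhs => rw [hA.pinv_eq_transpose_mul]
    rw [← Matrix.mul_assoc, ← Matrix.mul_assoc, hAt, Matrix.neg_mul, Matrix.neg_mul]
  calc Bp - Ap = -(Bp * E * Ap) - (1 - Bp * (A + E)) * Ap + Bp * (1 - A * Ap) := by
        simp only [Matrix.mul_sub, Matrix.sub_mul, Matrix.mul_add, Matrix.add_mul,
          Matrix.mul_one, Matrix.one_mul, Matrix.mul_assoc]
        abel
    _ = _ := by rw [hAp, hBp, sub_neg_eq_add]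

end IsMoorePenroseInverse

end MoorePenrose

def frobeniusSq (M : Matrix m n ℝ) : ℝ := ∑ i, ∑ j, M i j ^ 2

theorem frobeniusSq_nonneg (M : Matrix m n ℝ) : 0 ≤ frobeniusSq M :=
  Finset.sum_nonneg fun _ _ => Finset.sum_nonneg fun _ _ => sq_nonneg _

theorem frobeniusSq_transpose (M : Matrix m n ℝ) : frobeniusSq Mᵀ = frobeniusSq M :=
  Finset.sum_comm

theorem frobeniusSq_neg (M : Matrix m n ℝ) : frobeniusSq (-M) = frobeniusSq M := by
  simp [frobeniusSq]

theorem frobeniusSq_add (M N : Matrix m n ℝ) :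
    frobeniusSq (M + N) = frobeniusSq M + 2 * trace (Mᵀ * N) + frobeniusSq N := by
  simp only [frobeniusSq, trace, diag, mul_apply, transpose_apply, add_apply, add_sq,
    Finset.sum_add_distrib, Finset.mul_sum]
  rw [Finset.sum_comm (γ := n)]
  ring_nf

theorem frobeniusSq_add_of_transpose_mul_eq_zero {M N : Matrix m n ℝ} (h : Mᵀ * N = 0) :
    frobeniusSq (M + N) = frobeniusSq M + frobeniusSq N := by
  rw [frobeniusSq_add, h, trace_zero, mul_zero, add_zero]

theorem frobeniusSq_add_of_mul_transpose_eq_zero {M N : Matrix m n ℝ} (h : M * Nᵀ = 0) :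
    frobeniusSq (M + N) = frobeniusSq M + frobeniusSq N := by
  rw [← frobeniusSq_transpose, transpose_add, frobeniusSq_add_of_transpose_mul_eq_zero
    (by rwa [transpose_transpose]), frobeniusSq_transpose, frobeniusSq_transpose]

section Projection

variable [DecidableEq m] {P : Matrix m m ℝ}

theorem frobeniusSq_mul_add_frobeniusSq_one_sub_mul (hs : P.IsSymm) (hi : IsIdempotentElem P)
    (M : Matrix m n ℝ) : frobeniusSq (P * M) + frobeniusSq ((1 - P) * M) = frobeniusSq M := by
  have horth : (P * M)ᵀ * ((1 - P) * M) = 0 := by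
    rw [transpose_mul, hs.eq, Matrix.mul_assoc, ← Matrix.mul_assoc P, Matrix.mul_sub,
      Matrix.mul_one, hi.eq, sub_self, Matrix.zero_mul, Matrix.mul_zero]
  rw [← frobeniusSq_add_of_transpose_mul_eq_zero horth, ← Matrix.add_mul, add_sub_cancel,
    Matrix.one_mul]

theorem frobeniusSq_one_sub_mul_le (hs : P.IsSymm) (hi : IsIdempotentElem P)
    (M : Matrix m n ℝ) : frobeniusSq ((1 - P) * M) ≤ frobeniusSq M := by
  rw [← frobeniusSq_mul_add_frobeniusSq_one_sub_mul hs hi M]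
  exact le_add_of_nonneg_left (frobeniusSq_nonneg _)

end Projection

section OperatorNorm

variable [DecidableEq n]

theorem sum_sq_mulVec_le (M : Matrix m n ℝ) (x : n → ℝ) :
    ∑ i, (M *ᵥ x) i ^ 2 ≤ ‖M‖ ^ 2 * ∑ j, x j ^ 2 := by
  have h := pow_le_pow_left₀ (norm_nonneg _) (M.l2_opNorm_mulVec (WithLp.toLp 2 x)) 2
  rwa [mul_pow, EuclideanSpace.real_norm_sq_eq, EuclideanSpace.real_norm_sq_eq] at h

theorem frobeniusSq_mul_le_left (M : Matrix m n ℝ) (N : Matrix n p ℝ) :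
    frobeniusSq (M * N) ≤ ‖M‖ ^ 2 * frobeniusSq N := by
  simp only [frobeniusSq]
  rw [Finset.sum_comm, Finset.sum_comm (s := Finset.univ (α := n)), Finset.mul_sum]
  exact Finset.sum_le_sum fun j _ => sum_sq_mulVec_le M fun k => N k j

theorem l2_opNorm_transpose [DecidableEq m] (M : Matrix m n ℝ) : ‖Mᵀ‖ = ‖M‖ := by
  rw [← conjTranspose_eq_transpose_of_trivial, l2_opNorm_conjTranspose]

theorem frobeniusSq_mul_le_right [DecidableEq m] (M : Matrix p m ℝ) (N : Matrix m n ℝ) :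
    frobeniusSq (M * N) ≤ frobeniusSq M * ‖N‖ ^ 2 := by
  rw [← frobeniusSq_transpose, transpose_mul, ← frobeniusSq_transpose M, mul_comm,
    ← l2_opNorm_transpose N]
  exact frobeniusSq_mul_le_left _ _

end OperatorNorm

namespace IsMoorePenroseInverse

variable [DecidableEq m] [DecidableEq n] {A E : Matrix m n ℝ} {Ap Bp : Matrix n m ℝ}

theorem frobeniusSq_pinv_sub_pinv_eq (hA : IsMoorePenroseInverse A Ap)
    (hB : IsMoorePenroseInverse (A + E) Bp) :
    frobeniusSq (Bp - Ap) = frobeniusSq (Bp * E * Ap) +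
      frobeniusSq ((1 - Bp * (A + E)) * Eᵀ * Apᵀ * Ap) +
      frobeniusSq (Bp * Bpᵀ * Eᵀ * (1 - A * Ap)) := by
  have hQ : (1 - Bp * (A + E)).IsSymm := isSymm_one.sub hB.isSymm_pinv_mul
  have hP : (1 - A * Ap).IsSymm := isSymm_one.sub hA.isSymm_mul_pinv
  have h₁₂ : (-(Bp * E * Ap))ᵀ * ((1 - Bp * (A + E)) * Eᵀ * Apᵀ * Ap) = 0 := by
    have hBp : (Bp * E * Ap)ᵀ * (1 - Bp * (A + E)) = 0 := by
      rw [← hQ.eq, ← transpose_mul, ← Matrix.mul_assoc, ← Matrix.mul_assoc,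
        hB.one_sub_mul_pinv, Matrix.zero_mul, Matrix.zero_mul, transpose_zero]
    simp only [transpose_neg, Matrix.neg_mul, neg_eq_zero, Matrix.mul_assoc] at hBp ⊢
    rw [← Matrix.mul_assoc, hBp, Matrix.zero_mul]
  have h₁₂₃ : (-(Bp * E * Ap) + (1 - Bp * (A + E)) * Eᵀ * Apᵀ * Ap) *
      (Bp * Bpᵀ * Eᵀ * (1 - A * Ap))ᵀ = 0 := by
    rw [transpose_mul, hP.eq, ← Matrix.neg_mul, ← Matrix.add_mul, Matrix.mul_assoc,
      ← Matrix.mul_assoc Ap, hA.pinv_mul_one_sub, Matrix.zero_mul, Matrix.mul_zero]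
  rw [hA.pinv_sub_pinv_eq hB, frobeniusSq_add_of_mul_transpose_eq_zero h₁₂₃,
    frobeniusSq_add_of_transpose_mul_eq_zero h₁₂, frobeniusSq_neg]

theorem frobeniusSq_pinv_sub_pinv_le_sum (hA : IsMoorePenroseInverse A Ap)
    (hB : IsMoorePenroseInverse (A + E) Bp) :
    frobeniusSq (Bp - Ap) ≤ ‖Bp‖ ^ 2 * ‖Ap‖ ^ 2 * frobeniusSq E +
      ‖Ap‖ ^ 2 * ‖Ap‖ ^ 2 * frobeniusSq (A * Ap * E) +
      ‖Bp‖ ^ 2 * ‖Bp‖ ^ 2 * frobeniusSq ((1 - A * Ap) * E) := by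
  have h₁ : frobeniusSq (Bp * E * Ap) ≤ ‖Bp‖ ^ 2 * ‖Ap‖ ^ 2 * frobeniusSq E :=
    calc frobeniusSq (Bp * E * Ap) ≤ frobeniusSq (Bp * E) * ‖Ap‖ ^ 2 :=
          frobeniusSq_mul_le_right _ _
      _ ≤ ‖Bp‖ ^ 2 * frobeniusSq E * ‖Ap‖ ^ 2 := by gcongr; exact frobeniusSq_mul_le_left _ _
      _ = ‖Bp‖ ^ 2 * ‖Ap‖ ^ 2 * frobeniusSq E := by ring
  have h₂ : frobeniusSq ((1 - Bp * (A + E)) * Eᵀ * Apᵀ * Ap) ≤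
      ‖Ap‖ ^ 2 * ‖Ap‖ ^ 2 * frobeniusSq (A * Ap * E) :=
    calc frobeniusSq ((1 - Bp * (A + E)) * Eᵀ * Apᵀ * Ap)
        = frobeniusSq ((1 - Bp * (A + E)) * ((Ap * (A * Ap * E))ᵀ * Ap)) := by
          rw [← Matrix.mul_assoc Ap, ← Matrix.mul_assoc Ap, hA.pinv_mul_pinv, transpose_mul]
          simp only [Matrix.mul_assoc]
      _ ≤ frobeniusSq ((Ap * (A * Ap * E))ᵀ * Ap) :=
          frobeniusSq_one_sub_mul_le hB.isSymm_pinv_mul hB.symm.isIdempotentElem_mul_pinv _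
      _ ≤ frobeniusSq (Ap * (A * Ap * E)) * ‖Ap‖ ^ 2 := by
          rw [← frobeniusSq_transpose (Ap * _)]; exact frobeniusSq_mul_le_right _ _
      _ ≤ ‖Ap‖ ^ 2 * frobeniusSq (A * Ap * E) * ‖Ap‖ ^ 2 := by
          gcongr; exact frobeniusSq_mul_le_left _ _
      _ = ‖Ap‖ ^ 2 * ‖Ap‖ ^ 2 * frobeniusSq (A * Ap * E) := by ring
  have h₃ : frobeniusSq (Bp * Bpᵀ * Eᵀ * (1 - A * Ap)) ≤
      ‖Bp‖ ^ 2 * ‖Bp‖ ^ 2 * frobeniusSq ((1 - A * Ap) * E) :=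
    calc frobeniusSq (Bp * Bpᵀ * Eᵀ * (1 - A * Ap))
        = frobeniusSq (Bp * (Bpᵀ * ((1 - A * Ap) * E)ᵀ)) := by
          rw [transpose_mul, (isSymm_one.sub hA.isSymm_mul_pinv).eq]
          simp only [Matrix.mul_assoc]
      _ ≤ ‖Bp‖ ^ 2 * (‖Bp‖ ^ 2 * frobeniusSq ((1 - A * Ap) * E)) := by
          refine (frobeniusSq_mul_le_left _ _).trans ?_
          gcongr
          rw [← l2_opNorm_transpose Bp, ← frobeniusSq_transpose ((1 - A * Ap) * E)]
          exact frobeniusSq_mul_le_left _ _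
      _ = ‖Bp‖ ^ 2 * ‖Bp‖ ^ 2 * frobeniusSq ((1 - A * Ap) * E) := by ring
  rw [hA.frobeniusSq_pinv_sub_pinv_eq hB]
  gcongr

theorem frobeniusSq_pinv_sub_pinv_le (hA : IsMoorePenroseInverse A Ap)
    (hB : IsMoorePenroseInverse (A + E) Bp) :
    frobeniusSq (Bp - Ap) ≤ 2 * max (‖Ap‖ ^ 2) (‖Bp‖ ^ 2) ^ 2 * frobeniusSq E := by
  set μ := max (‖Ap‖ ^ 2) (‖Bp‖ ^ 2)
  have hAμ : ‖Ap‖ ^ 2 ≤ μ := le_max_left _ _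
  have hBμ : ‖Bp‖ ^ 2 ≤ μ := le_max_right _ _
  have hterm {a b : ℝ} (M : Matrix m n ℝ) (ha : a ≤ μ) (hb : b ≤ μ) (hb₀ : 0 ≤ b) :
      a * b * frobeniusSq M ≤ μ ^ 2 * frobeniusSq M :=
    mul_le_mul_of_nonneg_right (sq μ ▸ mul_le_mul ha hb hb₀ ((sq_nonneg _).trans hAμ))
      (frobeniusSq_nonneg M)
  calc frobeniusSq (Bp - Ap)
      ≤ μ ^ 2 * frobeniusSq E + μ ^ 2 * frobeniusSq (A * Ap * E) +
          μ ^ 2 * frobeniusSq ((1 - A * Ap) * E) :=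
        (hA.frobeniusSq_pinv_sub_pinv_le_sum hB).trans <| add_le_add (add_le_add
          (hterm _ hBμ hAμ (sq_nonneg _)) (hterm _ hAμ hAμ (sq_nonneg _)))
          (hterm _ hBμ hBμ (sq_nonneg _))
    _ = 2 * μ ^ 2 * frobeniusSq E := by
        rw [← frobeniusSq_mul_add_frobeniusSq_one_sub_mul hA.isSymm_mul_pinv
          hA.isIdempotentElem_mul_pinv E]
        ring

end IsMoorePenroseInverse

end Matrix

section Tensor

variable {n₁ n₂ n₃ n₄ : ℕ}

theorem bcirc_tProd [NeZero n₃] (A : Fin n₁ → Fin n₂ → ZMod n₃ → ℝ)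
    (B : Fin n₂ → Fin n₄ → ZMod n₃ → ℝ) : bcirc (tProd A B) = bcirc A * bcirc B := by
  ext ⟨i, k⟩ ⟨j, m⟩
  simp only [bcirc, tProd, mul_apply, Fintype.sum_prod_type]
  refine Finset.sum_congr rfl fun l _ => Fintype.sum_equiv (Equiv.addRight m) _ _ fun q => ?_
  rw [Equiv.coe_addRight, sub_add_eq_sub_sub, sub_right_comm, add_sub_cancel_right]

theorem bcirc_tTrans (A : Fin n₁ → Fin n₂ → ZMod n₃ → ℝ) : bcirc (tTrans A) = (bcirc A)ᵀ := by
  ext ⟨i, k⟩ ⟨j, m⟩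
  simp only [bcirc, tTrans, transpose_apply, neg_sub]

theorem bcirc_add (A B : Fin n₁ → Fin n₂ → ZMod n₃ → ℝ) : bcirc (A + B) = bcirc A + bcirc B :=
  rfl

theorem bcirc_sub (A B : Fin n₁ → Fin n₂ → ZMod n₃ → ℝ) : bcirc (A - B) = bcirc A - bcirc B :=
  rfl

theorem frobNorm_nonneg [NeZero n₃] (A : Fin n₁ → Fin n₂ → ZMod n₃ → ℝ) : 0 ≤ frobNorm A :=
  Real.sqrt_nonneg _

theorem frobeniusSq_bcirc [NeZero n₃] (A : Fin n₁ → Fin n₂ → ZMod n₃ → ℝ) :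
    frobeniusSq (bcirc A) = n₃ * frobNorm A ^ 2 := by
  have hshift (i : Fin n₁) (j : Fin n₂) (k : ZMod n₃) :
      ∑ m, A i j (k - m) ^ 2 = ∑ m, A i j m ^ 2 :=
    Fintype.sum_equiv (Equiv.subLeft k) _ _ fun _ => rfl
  rw [frobNorm, Real.sq_sqrt (by positivity)]
  simp only [frobeniusSq, bcirc, Fintype.sum_prod_type]
  simp_rw [hshift, Finset.sum_const, Finset.card_univ, ZMod.card, nsmul_eq_mul, Finset.mul_sum]

theorem IsMPInv.bcirc_isMoorePenroseInverse [NeZero n₃] {A : Fin n₁ → Fin n₂ → ZMod n₃ → ℝ}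
    {X : Fin n₂ → Fin n₁ → ZMod n₃ → ℝ} (h : IsMPInv A X) :
    (bcirc A).IsMoorePenroseInverse (bcirc X) := by
  obtain ⟨h₁, h₂, h₃, h₄⟩ := h
  refine ⟨?_, ?_, ?_, ?_⟩
  · rw [← bcirc_tProd, ← bcirc_tProd, h₁]
  · rw [← bcirc_tProd, ← bcirc_tProd, h₂]
  · rw [IsSymm, ← bcirc_tProd, ← bcirc_tTrans, h₃]
  · rw [IsSymm, ← bcirc_tProd, ← bcirc_tTrans, h₄]

end Tensor

theorem mp_inverse_perturbation_frobenius_general (n₁ n₂ n₃ : ℕ) [NeZero n₃]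
    (A E : Fin n₁ → Fin n₂ → ZMod n₃ → ℝ)
    (Ap Bp : Fin n₂ → Fin n₁ → ZMod n₃ → ℝ)
    (hAp : IsMPInv A Ap) (hBp : IsMPInv (A + E) Bp) :
    frobNorm (Bp - Ap) ≤
      Real.sqrt 2 * max (specNorm Ap ^ 2) (specNorm Bp ^ 2) * frobNorm E := by
  have hB := hBp.bcirc_isMoorePenroseInverse
  rw [bcirc_add] at hB
  have key := hAp.bcirc_isMoorePenroseInverse.frobeniusSq_pinv_sub_pinv_le hB
  rw [← bcirc_sub, frobeniusSq_bcirc, frobeniusSq_bcirc] at key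
  have hn₃ : (0 : ℝ) < n₃ := Nat.cast_pos.mpr (Nat.pos_of_neZero n₃)
  refine (sq_le_sq₀ (frobNorm_nonneg _)
    (mul_nonneg (by positivity) (frobNorm_nonneg E))).1 ?_
  rw [mul_pow, mul_pow, Real.sq_sqrt zero_le_two, specNorm, specNorm]
  exact le_of_mul_le_mul_left (by rw [mul_left_comm]; exact key) hn₃

theorem mp_inverse_perturbation_frobenius (n₁ n₂ n₃ : ℕ) [NeZero n₃]
    (hn₁ : 0 < n₁) (hn₂ : 0 < n₂)
    (A E : Fin n₁ → Fin n₂ → ZMod n₃ → ℝ)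
    (Ap Bp : Fin n₂ → Fin n₁ → ZMod n₃ → ℝ)
    (hAp : IsMPInv A Ap) (hBp : IsMPInv (A + E) Bp) :
    frobNorm (Bp - Ap) ≤
      Real.sqrt 2 * max (specNorm Ap ^ 2) (specNorm Bp ^ 2) * frobNorm E :=
  mp_inverse_perturbation_frobenius_general n₁ n₂ n₃ A E Ap Bp hAp hBp
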